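/- arXiv:2511.05411 — 5 statements merged into one kernel-verified Lean document; each statement's English description precedes it below -/
import Mathlib

section
/- Let I, J be nonempty open subintervals of ℝ, and let f : I → J and g : J → ℝ be strictly increasing functions. Then the generalized inverse of the composition g ∘ f equals f^(-1) ∘ g^(-1), i.e., (g ∘ f)^(-1) = f^(-1) ∘ g^(-1) on conv(g(f(I))). -/
/-- `g` is the generalized inverse of the strictly increasing function `f : I → ℝ`:
the (unique) increasing left inverse of `f` defined on `conv (f '' I)`. -/
def IsGenInv (I : Set ℝ) (f g : ℝ → ℝ) : Prop :=
  Set.MapsTo g (convexHull ℝ (f '' I)) I ∧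
  MonotoneOn g (convexHull ℝ (f '' I)) ∧
  ∀ x ∈ I, g (f x) = x

/-- Every point of the convex hull of `s ⊆ ℝ` lies between two points of `s`. -/
lemma exists_bounds_of_mem_convexHull {s : Set ℝ} {y : ℝ}
    (hy : y ∈ convexHull ℝ s) : ∃ a ∈ s, ∃ b ∈ s, a ≤ y ∧ y ≤ b := by
  have hsub : convexHull ℝ s ⊆ {y | ∃ a ∈ s, ∃ b ∈ s, a ≤ y ∧ y ≤ b} := by
    refine convexHull_min (fun x hx => ⟨x, hx, x, hx, le_refl _, le_refl _⟩) ?_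
    have : ({y | ∃ a ∈ s, ∃ b ∈ s, a ≤ y ∧ y ≤ b} : Set ℝ).OrdConnected := by
      constructor
      rintro y₁ ⟨a₁, ha₁, b₁, hb₁, h₁, h₁'⟩ y₂ ⟨a₂, ha₂, b₂, hb₂, h₂, h₂'⟩ z hz
      exact ⟨a₁, ha₁, b₂, hb₂, le_trans h₁ hz.1, le_trans hz.2 h₂'⟩
    exact this.convex
  exact hsub hy

/-- Generalized inverses are unique (one-sided inequality). -/
lemma genInv_le (I : Set ℝ) (hIc : I.OrdConnected) (h H1 H2 : ℝ → ℝ)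
    (h1 : IsGenInv I h H1) (h2 : IsGenInv I h H2) :
    ∀ y ∈ convexHull ℝ (h '' I), H1 y ≤ H2 y := by
  obtain ⟨m1, mono1, li1⟩ := h1
  obtain ⟨m2, mono2, li2⟩ := h2
  intro y hy
  by_contra hc
  push_neg at hc
  have hx1 : H1 y ∈ I := m1 hy
  have hx2 : H2 y ∈ I := m2 hy
  set x := (H2 y + H1 y) / 2 with hxdef
  have hxI : x ∈ I := hIc.out hx2 hx1 ⟨by simp [hxdef]; linarith, by simp [hxdef]; linarith⟩
  have hhx : h x ∈ convexHull ℝ (h '' I) := subset_convexHull ℝ _ ⟨x, hxI, rfl⟩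
  rcases le_total (h x) y with hle | hle
  · have := mono2 hhx hy hle
    rw [li2 x hxI] at this
    have : x ≤ H2 y := this
    simp only [hxdef] at this; linarith
  · have := mono1 hy hhx hle
    rw [li1 x hxI] at this
    simp only [hxdef] at this; linarith

theorem stmt_1 (I J : Set ℝ)
    (hIo : IsOpen I) (hIc : I.OrdConnected) (hIn : I.Nonempty)
    (hJo : IsOpen J) (hJc : J.OrdConnected) (hJn : J.Nonempty)
    (f g : ℝ → ℝ) (hf : StrictMonoOn f I) (hfJ : Set.MapsTo f I J)
    (hg : StrictMonoOn g J)
    (F G H : ℝ → ℝ)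
    (hF : IsGenInv I f F) (hG : IsGenInv J g G) (hH : IsGenInv I (g ∘ f) H) :
    Set.EqOn H (F ∘ G) (convexHull ℝ ((g ∘ f) '' I)) := by
  obtain ⟨Fm, Fmono, Fli⟩ := hF
  obtain ⟨Gm, Gmono, Gli⟩ := hG
  -- `conv ((g∘f)''I) ⊆ conv (g''J)`
  have hsubJ : convexHull ℝ ((g ∘ f) '' I) ⊆ convexHull ℝ (g '' J) := by
    apply convexHull_mono
    rintro _ ⟨x, hx, rfl⟩
    exact ⟨f x, hfJ hx, rfl⟩
  -- G maps conv ((g∘f)''I) into conv (f''I)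
  have hGmem : ∀ y ∈ convexHull ℝ ((g ∘ f) '' I), G y ∈ convexHull ℝ (f '' I) := by
    intro y hy
    obtain ⟨a, ⟨xa, hxa, rfl⟩, b, ⟨xb, hxb, rfl⟩, hay, hyb⟩ :=
      exists_bounds_of_mem_convexHull hy
    have haJ : (g ∘ f) xa ∈ convexHull ℝ (g '' J) :=
      subset_convexHull ℝ _ ⟨f xa, hfJ hxa, rfl⟩
    have hbJ : (g ∘ f) xb ∈ convexHull ℝ (g '' J) :=
      subset_convexHull ℝ _ ⟨f xb, hfJ hxb, rfl⟩
    have h1 : f xa ≤ G y := by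
      have := Gmono haJ (hsubJ hy) hay
      rwa [show (g ∘ f) xa = g (f xa) from rfl, Gli (f xa) (hfJ hxa)] at this
    have h2 : G y ≤ f xb := by
      have := Gmono (hsubJ hy) hbJ hyb
      rwa [show (g ∘ f) xb = g (f xb) from rfl, Gli (f xb) (hfJ hxb)] at this
    exact (convex_convexHull ℝ (f '' I)).ordConnected.out
      (subset_convexHull ℝ _ ⟨xa, hxa, rfl⟩)
      (subset_convexHull ℝ _ ⟨xb, hxb, rfl⟩) ⟨h1, h2⟩
  -- F ∘ G is a generalized inverse of g ∘ f
  have hFG : IsGenInv I (g ∘ f) (F ∘ G) := by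
    refine ⟨fun y hy => Fm (hGmem y hy), ?_, ?_⟩
    · intro y1 hy1 y2 hy2 hle
      exact Fmono (hGmem y1 hy1) (hGmem y2 hy2) (Gmono (hsubJ hy1) (hsubJ hy2) hle)
    · intro x hx
      show F (G (g (f x))) = x
      rw [Gli (f x) (hfJ hx), Fli x hx]
  intro y hy
  exact le_antisymm (genInv_le I hIc (g ∘ f) H (F ∘ G) hH hFG y hy)
    (genInv_le I hIc (g ∘ f) (F ∘ G) H hFG hH y hy)
end

section
/- Let k ∈ ℕ, I₀,…,I_k nonempty open intervals, I = I₁ × ⋯ × I_k, f_j : I_j → ℝ strictly increasing for j = 0,…,k, φ : I → I₀ arbitrary, and Φ : I → ℝ separately increasing and upper semicontinuous, with Γ = Φ^{-1}(C_{f₀}) dense in I. If the unweighted inequality A_{f₀}^[n](φ(x₁),…,φ(xₙ)) ≤ Φ(A_{f₁}^[n](x_{1,1},…,x_{n,1}),…,A_{f_k}^[n](x_{1,k},…,x_{n,k})) holds for all n ∈ ℕ and all x₁,…,xₙ ∈ I, then the corresponding weighted inequality holds: for all n, all x₁,…,xₙ ∈ I, and all weights λ ∈ [0,∞)ⁿ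 \ {0}, Ã_{f₀}^[n](φ(x₁),…,φ(xₙ);λ) ≤ Φ(Ã_{f₁}^[n](x_{1,1},…,x_{n,1};λ),…,Ã_{f_k}^[n](x_{1,k},…,x_{n,k};λ)). -/
open Set Filter Topology Finset

section MonotoneContinuity

variable {α β : Type*} [LinearOrder α] [TopologicalSpace α] [OrderTopology α]
  [LinearOrder β] [DenselyOrdered β] {s : Set α} {g : α → β}

theorem MonotoneOn.eventually_gt_of_ordConnected_image (hg : MonotoneOn g s)
    (him : (g '' s).OrdConnected) {a : α} (ha : a ∈ s) {b : β} (hb : b < g a) :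
    ∀ᶠ z in 𝓝[s] a, b < g z := by
  by_cases hleft : ∃ c ∈ s, c < a ∧ b < g c
  · obtain ⟨c, hcs, hca, hbc⟩ := hleft
    filter_upwards [self_mem_nhdsWithin, mem_nhdsWithin_of_mem_nhds (Ioi_mem_nhds hca)]
      with z hzs hcz using hbc.trans_le (hg hcs hzs (le_of_lt hcz))
  push Not at hleft
  -- A point `c < a` of `s` would force the gap `(b, g a)` into the interval `g '' s`.
  have hge : ∀ z ∈ s, a ≤ z := by
    intro c hcs
    by_contra! hca
    obtain ⟨y, hby, hya⟩ := exists_between hb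
    obtain ⟨d, hds, rfl⟩ : y ∈ g '' s :=
      him.out (mem_image_of_mem g hcs) (mem_image_of_mem g ha)
        ⟨(hleft c hcs hca).trans hby.le, hya.le⟩
    rcases lt_or_ge d a with hda | had
    · exact (hleft d hds hda).not_gt hby
    · exact (hg ha hds had).not_gt hya
  filter_upwards [self_mem_nhdsWithin] with z hz using hb.trans_le (hg ha hz (hge z hz))

theorem MonotoneOn.continuousOn_of_ordConnected_image [TopologicalSpace β] [OrderTopology β]
    (hg : MonotoneOn g s) (him : (g '' s).OrdConnected) : ContinuousOn g s := fun a ha =>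
  tendsto_order.2 ⟨fun _ hb => hg.eventually_gt_of_ordConnected_image him ha hb,
    fun _ hb => @MonotoneOn.eventually_gt_of_ordConnected_image αᵒᵈ βᵒᵈ _ _ _ _ _ s
      _ hg.dual him.dual a ha _ hb⟩

end MonotoneContinuity

theorem UpperSemicontinuousWithinAt.ge_of_tendsto {α β γ : Type*} [TopologicalSpace α]
    [LinearOrder γ] [DenselyOrdered γ] [TopologicalSpace γ] [OrderTopology γ]
    {Φ : α → γ} {s : Set α} {u : α} {l : Filter β} [l.NeBot] {U : β → α} {v : β → γ} {y : γ}
    (hΦ : UpperSemicontinuousWithinAt Φ s u) (hU : Tendsto U l (𝓝[s] u))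
    (hv : Tendsto v l (𝓝 y)) (hle : ∀ᶠ t in l, v t ≤ Φ (U t)) : y ≤ Φ u :=
  le_of_forall_gt_imp_ge_of_dense fun c hc => le_of_tendsto hv <| by
    filter_upwards [hle, hU.eventually (hΦ c hc)] with t hvt hct using hvt.trans hct.le

theorem sum_finSigmaFinEquiv_symm_fst {M : Type*} [AddCommMonoid M] {n : ℕ} (m : Fin n → ℕ)
    (h : Fin n → M) : ∑ t, h ((finSigmaFinEquiv (n := m)).symm t).1 = ∑ i, m i • h i := by
  rw [← finSigmaFinEquiv.sum_comp, Fintype.sum_sigma]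
  simp

theorem Filter.Tendsto.centerMass_weights {ι β E : Type*} [AddCommGroup E] [Module ℝ E]
    [TopologicalSpace E] [ContinuousAdd E] [ContinuousSMul ℝ E] {t : Finset ι} {l : Filter β}
    {W : β → ι → ℝ} {w : ι → ℝ} (hW : Tendsto W l (𝓝 w)) (hw : ∑ i ∈ t, w i ≠ 0) (z : ι → E) :
    Tendsto (fun b => t.centerMass (W b) z) l (𝓝 (t.centerMass w z)) := by
  have hWi : ∀ i, Tendsto (fun b => W b i) l (𝓝 (w i)) := tendsto_pi_nhds.1 hW
  exact ((tendsto_finsetSum t fun i _ => hWi i).inv₀ hw).smul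
    (tendsto_finsetSum t fun i _ => (hWi i).smul_const (z i))

section NatFloorWeights

variable {ι E : Type*} [Fintype ι] {w : ι → ℝ}

theorem eventually_pos_sum_nat_floor_mul (hw : 0 ≤ w) (hw0 : ∑ i, w i ≠ 0) :
    ∀ᶠ t : ℕ in atTop, 0 < ∑ i, ⌊w i * t⌋₊ := by
  obtain ⟨i, -, hi⟩ := exists_ne_zero_of_sum_ne_zero hw0
  filter_upwards [(tendsto_nat_floor_mul_atTop _ ((hw i).lt_of_ne' hi)).eventually_gt_atTop 0]
    with t ht using
    ht.trans_le (single_le_sum (f := fun j => ⌊w j * t⌋₊) (fun j _ => Nat.zero_le _) (mem_univ i))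

theorem tendsto_centerMass_nat_floor_mul [AddCommGroup E] [Module ℝ E] [TopologicalSpace E]
    [ContinuousAdd E] [ContinuousSMul ℝ E] (hw : 0 ≤ w) (hw0 : ∑ i, w i ≠ 0) (z : ι → E) :
    Tendsto (fun t : ℕ => univ.centerMass (fun i => (⌊w i * t⌋₊ : ℝ)) z) atTop
      (𝓝 (univ.centerMass w z)) := by
  have hW : Tendsto (fun t : ℕ => (t : ℝ)⁻¹ • fun i => (⌊w i * t⌋₊ : ℝ)) atTop (𝓝 w) :=
    tendsto_pi_nhds.2 fun i => by
      simpa [div_eq_inv_mul, Function.comp_def] using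
        (tendsto_nat_floor_mul_div_atTop (hw i)).comp tendsto_natCast_atTop_atTop
  refine (hW.centerMass_weights hw0 z).congr' ?_
  filter_upwards [eventually_ne_atTop 0] with t ht
  exact centerMass_smul_left _ _ (inv_ne_zero (Nat.cast_ne_zero.2 ht))

end NatFloorWeights

/-- The weighted quasi-arithmetic mean `Ã_F(z; w)` of the paper, with `G` in the role of `F⁻¹`. -/
noncomputable def quasiMean {ι : Type*} [Fintype ι] (G F : ℝ → ℝ) (w z : ι → ℝ) : ℝ :=
  G (univ.centerMass w fun i => F (z i))

theorem quasiMean_eq {ι : Type*} [Fintype ι] (G F : ℝ → ℝ) (w z : ι → ℝ) :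
    quasiMean G F w z = G ((∑ i, w i * F (z i)) / ∑ i, w i) := by
  simp [quasiMean, centerMass, div_eq_inv_mul]

theorem quasiMean_natCast {n : ℕ} (G F : ℝ → ℝ) (m : Fin n → ℕ) (z : Fin n → ℝ) :
    quasiMean G F (fun i => (m i : ℝ)) z =
      G ((∑ t, F (z ((finSigmaFinEquiv (n := m)).symm t).1)) / ((∑ i, m i : ℕ) : ℝ)) := by
  rw [quasiMean_eq, sum_finSigmaFinEquiv_symm_fst m fun i => F (z i)]
  simp

theorem centerMass_mem_convexHull_image {ι : Type*} [Fintype ι] {w z : ι → ℝ} {J : Set ℝ}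
    (F : ℝ → ℝ) (hw : 0 ≤ w) (hw0 : 0 < ∑ i, w i) (hz : ∀ i, z i ∈ J) :
    univ.centerMass w (fun i => F (z i)) ∈ convexHull ℝ (F '' J) :=
  centerMass_mem_convexHull _ (fun i _ => hw i) hw0 fun i _ => mem_image_of_mem F (hz i)

namespace IsGenInv

variable {J : Set ℝ} {F G : ℝ → ℝ} {ι : Type*} [Fintype ι] {w z : ι → ℝ}

theorem image_convexHull (h : IsGenInv J F G) : G '' convexHull ℝ (F '' J) = J :=
  h.1.image_subset.antisymm fun x hx =>
    ⟨F x, subset_convexHull ℝ _ (mem_image_of_mem F hx), h.2.2 x hx⟩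

theorem continuousOn (h : IsGenInv J F G) (hJ : J.OrdConnected) :
    ContinuousOn G (convexHull ℝ (F '' J)) :=
  h.2.1.continuousOn_of_ordConnected_image (by rwa [h.image_convexHull])

theorem quasiMean_mem (h : IsGenInv J F G) (hw : 0 ≤ w) (hw0 : ∑ i, w i ≠ 0)
    (hz : ∀ i, z i ∈ J) : quasiMean G F w z ∈ J :=
  h.1 (centerMass_mem_convexHull_image F hw ((sum_nonneg fun i _ => hw i).lt_of_ne' hw0) hz)

theorem tendsto_quasiMean_nat_floor_mul (h : IsGenInv J F G) (hJ : J.OrdConnected)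
    (hw : 0 ≤ w) (hw0 : ∑ i, w i ≠ 0) (hz : ∀ i, z i ∈ J) :
    Tendsto (fun t : ℕ => quasiMean G F (fun i => (⌊w i * t⌋₊ : ℝ)) z) atTop
      (𝓝[J] quasiMean G F w z) := by
  have hmem : ∀ᶠ t : ℕ in atTop,
      univ.centerMass (fun i => (⌊w i * t⌋₊ : ℝ)) (fun i => F (z i)) ∈ convexHull ℝ (F '' J) := by
    filter_upwards [eventually_pos_sum_nat_floor_mul hw hw0] with t ht
    exact centerMass_mem_convexHull_image F (fun i => Nat.cast_nonneg _) (by exact_mod_cast ht) hz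
  have hlim := centerMass_mem_convexHull_image F hw ((sum_nonneg fun i _ => hw i).lt_of_ne' hw0) hz
  exact ((h.continuousOn hJ _ hlim).tendsto_nhdsWithin h.1).comp
    (tendsto_nhdsWithin_iff.2 ⟨tendsto_centerMass_nat_floor_mul hw hw0 _, hmem⟩)

end IsGenInv

theorem stmt_4_general (k : ℕ)
    (I0 : Set ℝ) (I : Fin k → Set ℝ)
    (hI0c : I0.OrdConnected)
    (hIc : ∀ j, (I j).OrdConnected)
    (f0 : ℝ → ℝ) (f : Fin k → ℝ → ℝ) (g0 : ℝ → ℝ) (g : Fin k → ℝ → ℝ)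
    (hg0 : IsGenInv I0 f0 g0) (hg : ∀ j, IsGenInv (I j) (f j) (g j))
    (φ Φ : (Fin k → ℝ) → ℝ)
    (hφ : Set.MapsTo φ (Set.univ.pi I) I0)
    (hΦusc : UpperSemicontinuousOn Φ (Set.univ.pi I))
    (ha : ∀ n : ℕ, 0 < n → ∀ x : Fin n → Fin k → ℝ, (∀ i j, x i j ∈ I j) →
      g0 ((∑ i, f0 (φ (x i))) / n) ≤ Φ (fun j => g j ((∑ i, f j (x i j)) / n))) :
    ∀ n : ℕ, ∀ x : Fin n → Fin k → ℝ, (∀ i j, x i j ∈ I j) →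
      ∀ lam : Fin n → ℝ, (∀ i, 0 ≤ lam i) → (∑ i, lam i) ≠ 0 →
        g0 ((∑ i, lam i * f0 (φ (x i))) / ∑ i, lam i) ≤
          Φ (fun j => g j ((∑ i, lam i * f j (x i j)) / ∑ i, lam i)) := by
  intro n x hx lam hlam hsum
  simp only [← quasiMean_eq]
  have hlhs := (hg0.tendsto_quasiMean_nat_floor_mul hI0c hlam hsum
    fun i => hφ fun j _ => hx i j).mono_right nhdsWithin_le_nhds
  have hrhs : Tendsto
      (fun (t : ℕ) j => quasiMean (g j) (f j) (fun i => (⌊lam i * t⌋₊ : ℝ)) fun i => x i j) atTop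
      (𝓝[Set.univ.pi I] fun j => quasiMean (g j) (f j) lam fun i => x i j) := by
    rw [nhdsWithin_pi_univ_eq]
    exact tendsto_iInf.2 fun j => tendsto_comap_iff.2
      ((hg j).tendsto_quasiMean_nat_floor_mul (hIc j) hlam hsum fun i => hx i j)
  refine UpperSemicontinuousWithinAt.ge_of_tendsto
    (hΦusc _ fun j _ => (hg j).quasiMean_mem hlam hsum fun i => hx i j) hrhs hlhs ?_
  filter_upwards [eventually_pos_sum_nat_floor_mul hlam hsum] with t ht
  simpa only [quasiMean_natCast] using
    ha _ ht (fun s => x ((finSigmaFinEquiv (n := fun i => ⌊lam i * t⌋₊)).symm s).1)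
      fun s j => hx _ j

theorem stmt_4 (k : ℕ) (hk : 0 < k)
    (I0 : Set ℝ) (I : Fin k → Set ℝ)
    (hI0o : IsOpen I0) (hI0c : I0.OrdConnected) (hI0n : I0.Nonempty)
    (hIo : ∀ j, IsOpen (I j)) (hIc : ∀ j, (I j).OrdConnected) (hIn : ∀ j, (I j).Nonempty)
    (f0 : ℝ → ℝ) (f : Fin k → ℝ → ℝ) (g0 : ℝ → ℝ) (g : Fin k → ℝ → ℝ)
    (hf0 : StrictMonoOn f0 I0) (hf : ∀ j, StrictMonoOn (f j) (I j))
    (hg0 : IsGenInv I0 f0 g0) (hg : ∀ j, IsGenInv (I j) (f j) (g j))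
    (φ Φ : (Fin k → ℝ) → ℝ)
    (hφ : Set.MapsTo φ (Set.univ.pi I) I0)
    (hΦmono : ∀ u v : Fin k → ℝ, (∀ j, u j ∈ I j) → (∀ j, v j ∈ I j) → u ≤ v → Φ u ≤ Φ v)
    (hΦusc : UpperSemicontinuousOn Φ (Set.univ.pi I))
    (hdense : Set.univ.pi I ⊆
      closure {t : Fin k → ℝ | (∀ j, t j ∈ I j) ∧ ContinuousWithinAt f0 I0 (Φ t)})
    (ha : ∀ n : ℕ, 0 < n → ∀ x : Fin n → Fin k → ℝ, (∀ i j, x i j ∈ I j) →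
      g0 ((∑ i, f0 (φ (x i))) / n) ≤ Φ (fun j => g j ((∑ i, f j (x i j)) / n))) :
    ∀ n : ℕ, ∀ x : Fin n → Fin k → ℝ, (∀ i j, x i j ∈ I j) →
      ∀ lam : Fin n → ℝ, (∀ i, 0 ≤ lam i) → (∑ i, lam i) ≠ 0 →
        g0 ((∑ i, lam i * f0 (φ (x i))) / ∑ i, lam i) ≤
          Φ (fun j => g j ((∑ i, lam i * f j (x i j)) / ∑ i, lam i)) :=
  stmt_4_general k I0 I hI0c hIc f0 f g0 g hg0 hg φ Φ hφ hΦusc ha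
end

section
/- Let I₁,…,I_k be nonempty open intervals and φ : I₁ × ⋯ × I_k → ℝ be separately strictly increasing. If for every z in the product I and every ℓ ∈ {1,…,k} the single-variable section x ↦ φ(z₁,…,z_{ℓ−1},x,z_{ℓ+1},…,z_k) is continuous on I_ℓ, then φ is continuous on I₁ × ⋯ × I_k. -/
private lemma aux_mono (k : ℕ) (I : Fin k → Set ℝ) (φ : (Fin k → ℝ) → ℝ)
    (hφs : ∀ (ℓ : Fin k) (z : Fin k → ℝ), (∀ j, z j ∈ I j) →
      ∀ s s' : ℝ, s ∈ I ℓ → s' ∈ I ℓ → s < s' →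
        φ (Function.update z ℓ s) < φ (Function.update z ℓ s')) :
    ∀ n : ℕ, ∀ a x : Fin k → ℝ, (∀ j, a j ∈ I j) → (∀ j, x j ∈ I j) →
      (∀ j, a j ≤ x j) → (∀ j : Fin k, n ≤ (j : ℕ) → a j = x j) → φ a ≤ φ x := by
  intro n
  induction n with
  | zero =>
    intro a x _ _ _ heq
    rw [funext fun j => heq j (Nat.zero_le _)]
  | succ n ih =>
    intro a x ha hx hax heq
    by_cases hn : n < k
    · set ℓ : Fin k := ⟨n, hn⟩ with hℓ
      have hℓv : (ℓ : ℕ) = n := rfl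
      set a' := Function.update a ℓ (x ℓ) with ha'
      have ha'mem : ∀ j, a' j ∈ I j := by
        intro j; rcases eq_or_ne j ℓ with rfl | h
        · simpa [ha'] using hx ℓ
        · simpa [ha', Function.update_of_ne h] using ha j
      have h1 : φ a ≤ φ a' := by
        rcases eq_or_lt_of_le (hax ℓ) with h | h
        · rw [ha', ← h, Function.update_eq_self]
        · have := hφs ℓ a ha (a ℓ) (x ℓ) (ha ℓ) (hx ℓ) h
          rw [Function.update_eq_self] at this
          exact this.le
      refine h1.trans (ih a' x ha'mem hx ?_ ?_)
      · intro j; rcases eq_or_ne j ℓ with rfl | h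
        · simp [ha']
        · simpa [ha', Function.update_of_ne h] using hax j
      · intro j hj
        rcases eq_or_ne j ℓ with rfl | h
        · simp [ha']
        · have hj' : n + 1 ≤ (j : ℕ) := by
            rcases Nat.lt_or_ge (j : ℕ) (n + 1) with h' | h'
            · exact absurd (Fin.ext (by omega : (j : ℕ) = (ℓ : ℕ))) h
            · exact h'
          rw [ha', Function.update_of_ne h]
          exact heq j hj'
    · exact ih a x ha hx hax (fun j hj => absurd j.isLt (by omega))

private lemma aux_up (k : ℕ) (I : Fin k → Set ℝ)
    (hIo : ∀ j, IsOpen (I j))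
    (φ : (Fin k → ℝ) → ℝ)
    (hsec : ∀ (ℓ : Fin k) (z : Fin k → ℝ), (∀ j, z j ∈ I j) →
      ContinuousOn (fun x => φ (Function.update z ℓ x)) (I ℓ))
    (p : Fin k → ℝ) (hp : ∀ j, p j ∈ I j) :
    ∀ n : ℕ, ∀ ε : ℝ, 0 < ε → ∃ z : Fin k → ℝ, (∀ j, z j ∈ I j) ∧
      (∀ j : Fin k, (j : ℕ) < n → p j < z j) ∧
      (∀ j : Fin k, n ≤ (j : ℕ) → z j = p j) ∧ φ z < φ p + ε := by
  intro n
  induction n with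
  | zero =>
    intro ε hε
    exact ⟨p, hp, fun j h => absurd h (Nat.not_lt_zero _), fun _ _ => rfl, by linarith⟩
  | succ n ih =>
    intro ε hε
    obtain ⟨z, hz1, hz2, hz3, hz4⟩ := ih (ε / 2) (by linarith)
    by_cases hn : n < k
    · set ℓ : Fin k := ⟨n, hn⟩ with hℓ
      have hℓv : (ℓ : ℕ) = n := rfl
      have hcont : ContinuousAt (fun x => φ (Function.update z ℓ x)) (z ℓ) :=
        (hsec ℓ z hz1).continuousAt ((hIo ℓ).mem_nhds (hz1 ℓ))
      have hval : φ (Function.update z ℓ (z ℓ)) < φ p + ε := by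
        rw [Function.update_eq_self]; linarith
      have hS : (fun x => φ (Function.update z ℓ x)) ⁻¹' Set.Iio (φ p + ε) ∈ nhds (z ℓ) :=
        hcont.preimage_mem_nhds (Iio_mem_nhds hval)
      have hI : I ℓ ∈ nhds (z ℓ) := (hIo ℓ).mem_nhds (hz1 ℓ)
      have hmem : (I ℓ ∩ (fun x => φ (Function.update z ℓ x)) ⁻¹' Set.Iio (φ p + ε)) ∈
          nhdsWithin (z ℓ) (Set.Ioi (z ℓ)) :=
        nhdsWithin_le_nhds (Filter.inter_mem hI hS)
      have hne : Filter.NeBot (nhdsWithin (z ℓ) (Set.Ioi (z ℓ))) := nhdsGT_neBot _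
      obtain ⟨x, hx, hxgt⟩ :=
        (Filter.Eventually.and hmem self_mem_nhdsWithin).exists
      have hzp : z ℓ = p ℓ := hz3 ℓ (le_refl n)
      refine ⟨Function.update z ℓ x, ?_, ?_, ?_, hx.2⟩
      · intro j; rcases eq_or_ne j ℓ with rfl | h
        · simpa using hx.1
        · simpa [Function.update_of_ne h] using hz1 j
      · intro j hj
        rcases eq_or_ne j ℓ with rfl | h
        · simpa [hzp] using (hzp ▸ hxgt : p ℓ < x)
        · have : (j : ℕ) < n := by
            rcases Nat.lt_or_ge (j : ℕ) n with h' | h'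
            · exact h'
            · exact absurd (Fin.ext (by omega : (j : ℕ) = (ℓ : ℕ))) h
          rw [Function.update_of_ne h]
          exact hz2 j this
      · intro j hj
        have h : j ≠ ℓ := fun hjeq => by
          have : (j : ℕ) = n := by rw [hjeq]
          omega
        rw [Function.update_of_ne h]
        exact hz3 j (by omega)
    · refine ⟨z, hz1, fun j hj => hz2 j (by omega), fun j hj => hz3 j (by omega), by linarith⟩

private lemma aux_down (k : ℕ) (I : Fin k → Set ℝ)
    (hIo : ∀ j, IsOpen (I j))
    (φ : (Fin k → ℝ) → ℝ)
    (hsec : ∀ (ℓ : Fin k) (z : Fin k → ℝ), (∀ j, z j ∈ I j) →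
      ContinuousOn (fun x => φ (Function.update z ℓ x)) (I ℓ))
    (p : Fin k → ℝ) (hp : ∀ j, p j ∈ I j) :
    ∀ n : ℕ, ∀ ε : ℝ, 0 < ε → ∃ z : Fin k → ℝ, (∀ j, z j ∈ I j) ∧
      (∀ j : Fin k, (j : ℕ) < n → z j < p j) ∧
      (∀ j : Fin k, n ≤ (j : ℕ) → z j = p j) ∧ φ p - ε < φ z := by
  intro n
  induction n with
  | zero =>
    intro ε hε
    exact ⟨p, hp, fun j h => absurd h (Nat.not_lt_zero _), fun _ _ => rfl, by linarith⟩
  | succ n ih =>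
    intro ε hε
    obtain ⟨z, hz1, hz2, hz3, hz4⟩ := ih (ε / 2) (by linarith)
    by_cases hn : n < k
    · set ℓ : Fin k := ⟨n, hn⟩ with hℓ
      have hℓv : (ℓ : ℕ) = n := rfl
      have hcont : ContinuousAt (fun x => φ (Function.update z ℓ x)) (z ℓ) :=
        (hsec ℓ z hz1).continuousAt ((hIo ℓ).mem_nhds (hz1 ℓ))
      have hval : φ p - ε < φ (Function.update z ℓ (z ℓ)) := by
        rw [Function.update_eq_self]; linarith
      have hS : (fun x => φ (Function.update z ℓ x)) ⁻¹' Set.Ioi (φ p - ε) ∈ nhds (z ℓ) :=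
        hcont.preimage_mem_nhds (Ioi_mem_nhds hval)
      have hI : I ℓ ∈ nhds (z ℓ) := (hIo ℓ).mem_nhds (hz1 ℓ)
      have hmem : (I ℓ ∩ (fun x => φ (Function.update z ℓ x)) ⁻¹' Set.Ioi (φ p - ε)) ∈
          nhdsWithin (z ℓ) (Set.Iio (z ℓ)) :=
        nhdsWithin_le_nhds (Filter.inter_mem hI hS)
      have hne : Filter.NeBot (nhdsWithin (z ℓ) (Set.Iio (z ℓ))) := nhdsLT_neBot _
      obtain ⟨x, hx, hxlt⟩ :=
        (Filter.Eventually.and hmem self_mem_nhdsWithin).exists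
      have hzp : z ℓ = p ℓ := hz3 ℓ (le_refl n)
      refine ⟨Function.update z ℓ x, ?_, ?_, ?_, hx.2⟩
      · intro j; rcases eq_or_ne j ℓ with rfl | h
        · simpa using hx.1
        · simpa [Function.update_of_ne h] using hz1 j
      · intro j hj
        rcases eq_or_ne j ℓ with rfl | h
        · simpa [hzp] using (hzp ▸ hxlt : x < p ℓ)
        · have : (j : ℕ) < n := by
            rcases Nat.lt_or_ge (j : ℕ) n with h' | h'
            · exact h'
            · exact absurd (Fin.ext (by omega : (j : ℕ) = (ℓ : ℕ))) h
          rw [Function.update_of_ne h]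
          exact hz2 j this
      · intro j hj
        have h : j ≠ ℓ := fun hjeq => by
          have : (j : ℕ) = n := by rw [hjeq]
          omega
        rw [Function.update_of_ne h]
        exact hz3 j (by omega)
    · refine ⟨z, hz1, fun j hj => hz2 j (by omega), fun j hj => hz3 j (by omega), by linarith⟩

theorem stmt_11 (k : ℕ) (hk : 0 < k)
    (I : Fin k → Set ℝ)
    (hIo : ∀ j, IsOpen (I j)) (hIc : ∀ j, (I j).OrdConnected) (hIn : ∀ j, (I j).Nonempty)
    (φ : (Fin k → ℝ) → ℝ)
    (hφs : ∀ (ℓ : Fin k) (z : Fin k → ℝ), (∀ j, z j ∈ I j) →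
      ∀ s s' : ℝ, s ∈ I ℓ → s' ∈ I ℓ → s < s' →
        φ (Function.update z ℓ s) < φ (Function.update z ℓ s'))
    (hsec : ∀ (ℓ : Fin k) (z : Fin k → ℝ), (∀ j, z j ∈ I j) →
      ContinuousOn (fun x => φ (Function.update z ℓ x)) (I ℓ)) :
    ContinuousOn φ (Set.univ.pi I) := by
  intro p hp
  have hp' : ∀ j, p j ∈ I j := fun j => hp j (Set.mem_univ j)
  have hmono : ∀ a x : Fin k → ℝ, (∀ j, a j ∈ I j) → (∀ j, x j ∈ I j) →
      (∀ j, a j ≤ x j) → φ a ≤ φ x := fun a x ha hx hax =>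
    aux_mono k I φ hφs k a x ha hx hax (fun j hj => absurd j.isLt (by omega))
  suffices h : ContinuousAt φ p from h.continuousWithinAt
  rw [ContinuousAt, tendsto_order]
  constructor
  · intro c hc
    obtain ⟨a, ha1, ha2, _, ha4⟩ :=
      aux_down k I hIo φ hsec p hp' k (φ p - c) (by linarith)
    have hca : c < φ a := by linarith
    have hU : IsOpen (Set.univ.pi fun j => I j ∩ Set.Ioi (a j)) :=
      isOpen_set_pi Set.finite_univ (fun j _ => (hIo j).inter isOpen_Ioi)
    have hpU : p ∈ Set.univ.pi fun j => I j ∩ Set.Ioi (a j) :=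
      Set.mem_pi.mpr fun j _ => ⟨hp' j, ha2 j j.isLt⟩
    filter_upwards [hU.mem_nhds hpU] with x hxU
    have hx : ∀ j, x j ∈ I j ∧ a j < x j := fun j => hxU j (Set.mem_univ j)
    have hle : φ a ≤ φ x :=
      hmono a x ha1 (fun j => (hx j).1) (fun j => (hx j).2.le)
    linarith
  · intro c hc
    obtain ⟨b, hb1, hb2, _, hb4⟩ :=
      aux_up k I hIo φ hsec p hp' k (c - φ p) (by linarith)
    have hbc : φ b < c := by linarith
    have hU : IsOpen (Set.univ.pi fun j => I j ∩ Set.Iio (b j)) :=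
      isOpen_set_pi Set.finite_univ (fun j _ => (hIo j).inter isOpen_Iio)
    have hpU : p ∈ Set.univ.pi fun j => I j ∩ Set.Iio (b j) :=
      Set.mem_pi.mpr fun j _ => ⟨hp' j, hb2 j j.isLt⟩
    filter_upwards [hU.mem_nhds hpU] with x hxU
    have hx : ∀ j, x j ∈ I j ∧ x j < b j := fun j => hxU j (Set.mem_univ j)
    have hle : φ x ≤ φ b :=
      hmono x b (fun j => (hx j).1) hb1 (fun j => (hx j).2.le)
    linarith
end

section
/- Let f : I → ℝ be strictly increasing on a nonempty open interval I. Then the following are equivalent: (a) A_f^[n] is Jensen convex for every n, i.e., A_f^[n]((x₁+y₁)/2,…,(xₙ+yₙ)/2) ≤ (A_f^[n](x) + A_f^[n](y))/2 for all x,y ∈ Iⁿ; (c) this inequality holds for n = 2; (d) f is continuous and Ψ(u,v) = f((f^{-1}(u)+f^{-1}(v))/2) is concave on f(I)². -/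
open Set Finset

section Aux

/-- The two-point Jensen convexity condition. -/
def JC2 (I : Set ℝ) (f g : ℝ → ℝ) : Prop :=
  ∀ x₁ x₂ y₁ y₂ : ℝ, x₁ ∈ I → x₂ ∈ I → y₁ ∈ I → y₂ ∈ I →
    g ((f ((x₁ + y₁) / 2) + f ((x₂ + y₂) / 2)) / 2) ≤
      (g ((f x₁ + f x₂) / 2) + g ((f y₁ + f y₂) / 2)) / 2

variable {I : Set ℝ} {f g : ℝ → ℝ}

lemma mem_of_between (hIc : I.OrdConnected) {u v w : ℝ} (hu : u ∈ I) (hv : v ∈ I)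
    (h1 : u ≤ w) (h2 : w ≤ v) : w ∈ I :=
  hIc.out hu hv ⟨h1, h2⟩

lemma mid_mem (hIc : I.OrdConnected) {u v : ℝ} (hu : u ∈ I) (hv : v ∈ I) :
    (u + v) / 2 ∈ I := by
  rcases le_total u v with h | h
  · exact mem_of_between hIc hu hv (by linarith) (by linarith)
  · exact mem_of_between hIc hv hu (by linarith) (by linarith)

lemma mem_hull_of_between {u v w : ℝ} (hu : u ∈ f '' I) (hv : v ∈ f '' I)
    (h1 : u ≤ w) (h2 : w ≤ v) : w ∈ convexHull ℝ (f '' I) := by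
  have := segment_subset_convexHull (𝕜 := ℝ) hu hv
  apply this
  rw [segment_eq_Icc (h1.trans h2)]
  exact ⟨h1, h2⟩

lemma mid_mem_hull {u v : ℝ} (hu : u ∈ f '' I) (hv : v ∈ f '' I) :
    (u + v) / 2 ∈ convexHull ℝ (f '' I) := by
  rcases le_total u v with h | h
  · exact mem_hull_of_between hu hv (by linarith) (by linarith)
  · exact mem_hull_of_between hv hu (by linarith) (by linarith)

end Aux

section Key
variable {I : Set ℝ} {f g : ℝ → ℝ}

lemma fg_id (hg : IsGenInv I f g) {q : ℝ} (hq : q ∈ f '' I) : f (g q) = q := by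
  obtain ⟨z, hz, rfl⟩ := hq
  rw [hg.2.2 z hz]

lemma g_mem (hg : IsGenInv I f g) {q : ℝ} (hq : q ∈ f '' I) : g q ∈ I :=
  hg.1 ((subset_convexHull ℝ _) hq)

/-- K1: the basic consequence of two-point Jensen convexity. -/
lemma K1 (hIc : I.OrdConnected) (hg : IsGenInv I f g) (hC : JC2 I f g)
    {u v : ℝ} (hu : u ∈ I) (hv : v ∈ I) :
    (u + v) / 2 ≤ g ((f u + f v) / 2) := by
  have hm : (u + v) / 2 ∈ I := mid_mem hIc hu hv
  have h := hC u v v u hu hv hv hu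
  rw [add_comm v u] at h
  have e1 : (f ((u + v) / 2) + f ((u + v) / 2)) / 2 = f ((u + v) / 2) := by ring
  rw [e1, hg.2.2 _ hm] at h
  rw [add_comm (f v) (f u)] at h
  linarith

/-- K2 -/
lemma K2 (hIc : I.OrdConnected) (hf : StrictMonoOn f I) (hg : IsGenInv I f g) (hC : JC2 I f g)
    {t u v : ℝ} (ht : t ∈ I) (hu : u ∈ I) (hv : v ∈ I) (hlt : t < (u + v) / 2) :
    f t < (f u + f v) / 2 := by
  by_contra hcon
  push_neg at hcon
  have hwh : (f u + f v) / 2 ∈ convexHull ℝ (f '' I) :=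
    mid_mem_hull ⟨u, hu, rfl⟩ ⟨v, hv, rfl⟩
  have h1 : g ((f u + f v) / 2) ≤ g (f t) :=
    hg.2.1 hwh ((subset_convexHull ℝ _) ⟨t, ht, rfl⟩) hcon
  rw [hg.2.2 t ht] at h1
  have h2 := K1 hIc hg hC hu hv
  linarith

end Key

lemma ball_subI {I : Set ℝ} (hIo : IsOpen I) {p : ℝ} (hp : p ∈ I) :
    ∃ r > 0, ∀ x : ℝ, |x - p| < r → x ∈ I := by
  obtain ⟨r, hr, hball⟩ := Metric.isOpen_iff.mp hIo p hp
  exact ⟨r, hr, fun x hx => hball (by simpa [Metric.mem_ball, Real.dist_eq] using hx)⟩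

/-- No right jump. -/
lemma noRightJump {I : Set ℝ} {f g : ℝ → ℝ} (hIo : IsOpen I) (hIc : I.OrdConnected)
    (hf : StrictMonoOn f I) (hg : IsGenInv I f g) (hC : JC2 I f g)
    {p : ℝ} (hp : p ∈ I) {ε : ℝ} (hε : 0 < ε) :
    ∃ v ∈ I, p < v ∧ f v < f p + ε := by
  by_contra hcon
  push_neg at hcon
  obtain ⟨r, hr, hball⟩ := ball_subI hIo hp
  -- the set to the right is nonempty
  have hv1 : p + r / 2 ∈ I := hball _ (by rw [add_sub_cancel_left, abs_of_pos (by linarith)]; linarith)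
  have hne : (f '' (I ∩ Ioi p)).Nonempty := ⟨f (p + r / 2), ⟨p + r / 2, ⟨hv1, by simp; linarith⟩, rfl⟩⟩
  have hbdd : BddBelow (f '' (I ∩ Ioi p)) := by
    refine ⟨f p, ?_⟩
    rintro q ⟨z, ⟨hzI, hzp⟩, rfl⟩
    exact (hf hp hzI hzp).le
  set L := sInf (f '' (I ∩ Ioi p)) with hL
  have hLlb : ∀ s ∈ I, p < s → L ≤ f s := fun s hs hps => csInf_le hbdd ⟨s, ⟨hs, hps⟩, rfl⟩
  have hLge : f p + ε ≤ L := by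
    apply le_csInf hne
    rintro q ⟨z, ⟨hzI, hzp⟩, rfl⟩
    exact hcon z hzI hzp
  have hLgt : f p < L := by linarith
  -- pick v₀ with f v₀ < 2L - f p
  obtain ⟨q, hqmem, hq⟩ := (csInf_lt_iff hbdd hne).mp (show L < 2 * L - f p by linarith)
  obtain ⟨v₀, ⟨hv₀I, hv₀p'⟩, rfl⟩ := hqmem
  have hv₀p : p < v₀ := hv₀p'
  set w := (f p + f v₀) / 2 with hw
  have hwfp : f p < w := by
    have : f p < f v₀ := hf hp hv₀I hv₀p
    simp only [hw]; linarith
  have hwL : w < L := by simp only [hw]; linarith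
  have hwhull : w ∈ convexHull ℝ (f '' I) := mid_mem_hull ⟨p, hp, rfl⟩ ⟨v₀, hv₀I, rfl⟩
  -- g w ≤ s for every s ∈ I with p < s
  have hgw_le : ∀ s ∈ I, p < s → g w ≤ s := by
    intro s hs hps
    have : w ≤ f s := le_of_lt (lt_of_lt_of_le hwL (hLlb s hs hps))
    have := hg.2.1 hwhull ((subset_convexHull ℝ _) ⟨s, hs, rfl⟩) this
    rwa [hg.2.2 s hs] at this
  -- K1 : (p + v₀)/2 ≤ g w
  have hK := K1 hIc hg hC hp hv₀I
  rw [← hw] at hK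
  -- pick s strictly between p and (p+v₀)/2
  set s := p + min r (v₀ - p) / 4 with hs
  have hmin : 0 < min r (v₀ - p) := lt_min hr (by linarith)
  have hsI : s ∈ I := by
    apply hball
    rw [hs, add_sub_cancel_left, abs_of_pos (by linarith)]
    have : min r (v₀ - p) ≤ r := min_le_left _ _
    linarith
  have hsp : p < s := by simp only [hs]; linarith
  have hslt : s < (p + v₀) / 2 := by
    have : min r (v₀ - p) ≤ v₀ - p := min_le_right _ _
    simp only [hs]; linarith
  have h9 := hgw_le s hsI hsp
  exact absurd hslt (not_lt.mpr (hK.trans h9))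

/-- No left jump. -/
lemma noLeftJump {I : Set ℝ} {f g : ℝ → ℝ} (hIo : IsOpen I) (hIc : I.OrdConnected)
    (hf : StrictMonoOn f I) (hg : IsGenInv I f g) (hC : JC2 I f g)
    {p : ℝ} (hp : p ∈ I) {ε : ℝ} (hε : 0 < ε) :
    ∃ u ∈ I, u < p ∧ f p - ε < f u := by
  by_contra hcon
  push_neg at hcon
  obtain ⟨r, hr, hball⟩ := ball_subI hIo hp
  -- every point to the right has f-value ≥ f p + ε
  have hright : ∀ v ∈ I, p < v → f p + ε ≤ f v := by
    intro v hv hpv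
    set u := p - min r (v - p) / 4 with hu
    have hmin : 0 < min r (v - p) := lt_min hr (by linarith)
    have huI : u ∈ I := by
      apply hball
      rw [hu]
      rw [show p - min r (v - p) / 4 - p = -(min r (v - p) / 4) by ring, abs_neg,
        abs_of_pos (by linarith)]
      have : min r (v - p) ≤ r := min_le_left _ _
      linarith
    have hup : u < p := by simp only [hu]; linarith
    have hmid : p < (u + v) / 2 := by
      have : min r (v - p) ≤ v - p := min_le_right _ _
      simp only [hu]; linarith
    have h2 := K2 hIc hf hg hC hp huI hv hmid
    have h3 : f u ≤ f p - ε := hcon u huI hup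
    linarith
  obtain ⟨v, hvI, hpv, hfv⟩ := noRightJump hIo hIc hf hg hC hp hε
  have := hright v hvI hpv
  linarith

lemma f_contOn {I : Set ℝ} {f g : ℝ → ℝ} (hIo : IsOpen I) (hIc : I.OrdConnected)
    (hf : StrictMonoOn f I) (hg : IsGenInv I f g) (hC : JC2 I f g) :
    ContinuousOn f I := by
  intro p hp
  rw [Metric.continuousWithinAt_iff]
  intro ε hε
  obtain ⟨v, hvI, hpv, hfv⟩ := noRightJump hIo hIc hf hg hC hp hε
  obtain ⟨u, huI, hup, hfu⟩ := noLeftJump hIo hIc hf hg hC hp hε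
  refine ⟨min (v - p) (p - u), lt_min (by linarith) (by linarith), ?_⟩
  intro x hx hdist
  rw [Real.dist_eq] at hdist ⊢
  have h1 : x < v := by
    have := abs_lt.mp (lt_of_lt_of_le hdist (min_le_left _ _))
    linarith [this.2]
  have h2 : u < x := by
    have := abs_lt.mp (lt_of_lt_of_le hdist (min_le_right _ _))
    linarith [this.1]
  have hfx1 : f x < f v := hf hx hvI h1
  have hfx2 : f u < f x := hf huI hx h2
  rw [abs_lt]
  constructor <;> linarith

lemma g_contOn {I : Set ℝ} {f g : ℝ → ℝ} (hIo : IsOpen I) (hIc : I.OrdConnected)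
    (hf : StrictMonoOn f I) (hg : IsGenInv I f g) :
    ContinuousOn g (f '' I) := by
  rintro q ⟨p, hp, rfl⟩
  rw [Metric.continuousWithinAt_iff]
  intro ε hε
  obtain ⟨r, hr, hball⟩ := ball_subI hIo hp
  set ε' := min (ε / 2) (r / 2) with hε'
  have hε'pos : 0 < ε' := lt_min (by linarith) (by linarith)
  have hε'r : ε' < r := lt_of_le_of_lt (min_le_right _ _) (by linarith)
  have hε'ε : ε' < ε := lt_of_le_of_lt (min_le_left _ _) (by linarith)
  have huI : p - ε' ∈ I := hball _ (by rw [show p - ε' - p = -ε' by ring, abs_neg, abs_of_pos hε'pos]; exact hε'r)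
  have hvI : p + ε' ∈ I := hball _ (by rw [add_sub_cancel_left, abs_of_pos hε'pos]; exact hε'r)
  have hfu : f (p - ε') < f p := hf huI hp (by linarith)
  have hfv : f p < f (p + ε') := hf hp hvI (by linarith)
  refine ⟨min (f p - f (p - ε')) (f (p + ε') - f p), lt_min (by linarith) (by linarith), ?_⟩
  intro w hw hdist
  rw [Real.dist_eq] at hdist ⊢
  have h1 : f (p - ε') < w := by
    have := abs_lt.mp (lt_of_lt_of_le hdist (min_le_left _ _))
    linarith [this.1]
  have h2 : w < f (p + ε') := by
    have := abs_lt.mp (lt_of_lt_of_le hdist (min_le_right _ _))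
    linarith [this.2]
  have hwhull : w ∈ convexHull ℝ (f '' I) := (subset_convexHull ℝ _) hw
  have hg1 : p - ε' ≤ g w := by
    have := hg.2.1 ((subset_convexHull ℝ _) ⟨p - ε', huI, rfl⟩) hwhull h1.le
    rwa [hg.2.2 _ huI] at this
  have hg2 : g w ≤ p + ε' := by
    have := hg.2.1 hwhull ((subset_convexHull ℝ _) ⟨p + ε', hvI, rfl⟩) h2.le
    rwa [hg.2.2 _ hvI] at this
  rw [hg.2.2 _ hp, abs_lt]
  constructor <;> linarith

open Filter Topology in
lemma one_dim_concave {φ : ℝ → ℝ} (hc : ContinuousOn φ (Icc 0 1))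
    (hm : ∀ s ∈ Icc (0:ℝ) 1, ∀ t ∈ Icc (0:ℝ) 1, (φ s + φ t) / 2 ≤ φ ((s + t) / 2)) :
    ∀ t ∈ Icc (0:ℝ) 1, (1 - t) * φ 0 + t * φ 1 ≤ φ t := by
  set P : ℝ → Prop := fun t => t ∈ Icc (0:ℝ) 1 ∧ (1 - t) * φ 0 + t * φ 1 ≤ φ t with hP
  have hmidP : ∀ s t, P s → P t → P ((s + t) / 2) := by
    rintro s t ⟨hs, hs2⟩ ⟨ht, ht2⟩
    obtain ⟨hs0, hs1⟩ := hs
    obtain ⟨ht0, ht1⟩ := ht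
    refine ⟨⟨by linarith, by linarith⟩, ?_⟩
    have h := hm s ⟨hs0, hs1⟩ t ⟨ht0, ht1⟩
    have e : (1 - (s + t) / 2) * φ 0 + ((s + t) / 2) * φ 1 =
        (((1 - s) * φ 0 + s * φ 1) + ((1 - t) * φ 0 + t * φ 1)) / 2 := by ring
    rw [e]
    linarith
  have hdy : ∀ n : ℕ, ∀ k : ℕ, k ≤ 2 ^ n → P ((k : ℝ) / 2 ^ n) := by
    intro n
    induction n with
    | zero =>
      intro k hk
      interval_cases k
      · exact ⟨by norm_num, by norm_num⟩
      · exact ⟨by norm_num, by norm_num⟩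
    | succ n ih =>
      intro k hk
      have h2 : (2:ℕ) ^ (n+1) = 2 * 2 ^ n := by ring
      have hab : k / 2 + (k + 1) / 2 = k := by omega
      have haa : k / 2 ≤ 2 ^ n := by rw [h2] at hk; omega
      have hbb : (k + 1) / 2 ≤ 2 ^ n := by rw [h2] at hk; omega
      have hcast : ((k / 2 : ℕ) : ℝ) + (((k + 1) / 2 : ℕ) : ℝ) = (k : ℝ) := by
        exact_mod_cast congrArg (Nat.cast (R := ℝ)) hab
      have e : ((k : ℝ)) / 2 ^ (n+1) =
          (((k / 2 : ℕ) : ℝ) / 2 ^ n + (((k + 1) / 2 : ℕ) : ℝ) / 2 ^ n) / 2 := by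
        rw [← hcast]
        push_cast
        ring
      rw [e]
      exact hmidP _ _ (ih _ haa) (ih _ hbb)
  intro t ht
  obtain ⟨ht0, ht1⟩ := ht
  -- dyadic approximation from below
  set d : ℕ → ℝ := fun n => ((⌊t * 2 ^ n⌋).toNat : ℝ) / 2 ^ n with hd
  have hfl0 : ∀ n : ℕ, (0:ℤ) ≤ ⌊t * 2 ^ n⌋ := fun n =>
    Int.floor_nonneg.mpr (by positivity)
  have hcastfl : ∀ n : ℕ, (((⌊t * 2 ^ n⌋).toNat : ℝ)) = ((⌊t * 2 ^ n⌋ : ℤ) : ℝ) := by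
    intro n
    exact_mod_cast Int.toNat_of_nonneg (hfl0 n)
  have hklee : ∀ n : ℕ, (⌊t * 2 ^ n⌋).toNat ≤ 2 ^ n := by
    intro n
    rw [Int.toNat_le]
    have hle : t * 2 ^ n ≤ ((2 ^ n : ℤ) : ℝ) := by
      push_cast
      nlinarith [pow_pos (show (0:ℝ) < 2 by norm_num) n]
    have := Int.floor_le_floor hle
    rw [Int.floor_intCast] at this
    exact_mod_cast this
  have hd_le : ∀ n : ℕ, d n ≤ t := by
    intro n
    have h2 : (0:ℝ) < 2 ^ n := by positivity
    rw [hd]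
    simp only
    rw [div_le_iff₀ h2, hcastfl n]
    exact Int.floor_le _
  have hd_ge : ∀ n : ℕ, t - (1/2 : ℝ) ^ n ≤ d n := by
    intro n
    have h2 : (0:ℝ) < 2 ^ n := by positivity
    have hfloor := Int.lt_floor_add_one (t * 2 ^ n)
    have epow : ((1:ℝ)/2) ^ n = 1 / 2 ^ n := by rw [div_pow, one_pow]
    have key : t * 2 ^ n ≤ 1 + ((⌊t * 2 ^ n⌋ : ℤ) : ℝ) := by linarith
    have : t ≤ (1 + ((⌊t * 2 ^ n⌋ : ℤ) : ℝ)) / 2 ^ n := by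
      rw [le_div_iff₀ h2]; exact key
    rw [hd]
    simp only
    rw [hcastfl n, epow, sub_le_iff_le_add]
    have e2 : (1 + ((⌊t * 2 ^ n⌋ : ℤ) : ℝ)) / 2 ^ n =
        ((⌊t * 2 ^ n⌋ : ℤ) : ℝ) / 2 ^ n + 1 / 2 ^ n := by ring
    linarith
  have hdP : ∀ n : ℕ, P (d n) := fun n => hdy n _ (hklee n)
  have hlim1 : Tendsto (fun n : ℕ => t - (1/2:ℝ) ^ n) atTop (𝓝 t) := by
    have := tendsto_pow_atTop_nhds_zero_of_lt_one (show (0:ℝ) ≤ 1/2 by norm_num)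
      (show (1/2:ℝ) < 1 by norm_num)
    simpa using tendsto_const_nhds.sub this
  have hdt : Tendsto d atTop (𝓝 t) :=
    tendsto_of_tendsto_of_tendsto_of_le_of_le hlim1 tendsto_const_nhds hd_ge hd_le
  have hdmem : ∀ n, d n ∈ Icc (0:ℝ) 1 := fun n => (hdP n).1
  have hdt' : Tendsto d atTop (𝓝[Icc (0:ℝ) 1] t) :=
    tendsto_nhdsWithin_of_tendsto_nhds_of_eventually_within d hdt
      (Filter.Eventually.of_forall hdmem)
  have hφd : Tendsto (fun n => φ (d n)) atTop (𝓝 (φ t)) :=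
    (hc t ⟨ht0, ht1⟩).tendsto.comp hdt'
  have haff : Tendsto (fun n => (1 - d n) * φ 0 + d n * φ 1) atTop
      (𝓝 ((1 - t) * φ 0 + t * φ 1)) :=
    ((tendsto_const_nhds.sub hdt).mul tendsto_const_nhds).add (hdt.mul tendsto_const_nhds)
  exact le_of_tendsto_of_tendsto' haff hφd fun n => (hdP n).2

lemma concaveOn_of_midpoint {S : Set (ℝ × ℝ)} {Ψ : ℝ × ℝ → ℝ} (hS : Convex ℝ S)
    (hc : ContinuousOn Ψ S)
    (hm : ∀ p ∈ S, ∀ q ∈ S, (Ψ p + Ψ q) / 2 ≤ Ψ ((1/2 : ℝ) • (p + q))) :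
    ConcaveOn ℝ S Ψ := by
  refine ⟨hS, ?_⟩
  intro x hx y hy a b ha hb hab
  set γ : ℝ → ℝ × ℝ := fun t => (1 - t) • x + t • y with hγ
  have hγc : Continuous γ := by
    apply Continuous.add
    · exact (continuous_const.sub continuous_id).smul continuous_const
    · exact continuous_id.smul continuous_const
  have hmap : ∀ t ∈ Icc (0:ℝ) 1, γ t ∈ S := by
    intro t ht
    exact hS hx hy (by linarith [ht.2]) ht.1 (by ring)
  set φ : ℝ → ℝ := fun t => Ψ (γ t) with hφ
  have hφc : ContinuousOn φ (Icc 0 1) := hc.comp hγc.continuousOn hmap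
  have hφm : ∀ s ∈ Icc (0:ℝ) 1, ∀ t ∈ Icc (0:ℝ) 1, (φ s + φ t) / 2 ≤ φ ((s + t) / 2) := by
    intro s hs t ht
    have h := hm _ (hmap s hs) _ (hmap t ht)
    have e : γ ((s + t) / 2) = (1/2 : ℝ) • (γ s + γ t) := by
      simp only [hγ]
      module
    rw [hφ]
    simp only
    rw [e]
    exact h
  have h1 := one_dim_concave hφc hφm b ⟨hb, by linarith⟩
  have e0 : φ 0 = Ψ x := by simp [hφ, hγ]
  have e1 : φ 1 = Ψ y := by simp [hγ, hφ]
  have eb : φ b = Ψ (a • x + b • y) := by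
    rw [hφ]
    simp only [hγ]
    congr 1
    rw [show (1 : ℝ) - b = a by linarith]
  rw [e0, e1, eb] at h1
  simpa [smul_eq_mul, show (1:ℝ) - b = a by linarith] using h1

lemma image_convex {I : Set ℝ} {f : ℝ → ℝ} (hIc : I.OrdConnected)
    (hfc : ContinuousOn f I) : Convex ℝ (f '' I) := by
  have h1 : IsPreconnected I := (convex_iff_ordConnected.mpr hIc).isPreconnected
  have h2 : IsPreconnected (f '' I) := h1.image f hfc
  exact convex_iff_ordConnected.mpr h2.ordConnected

lemma psi_midpoint {I : Set ℝ} {f g : ℝ → ℝ} (hIo : IsOpen I) (hIc : I.OrdConnected)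
    (hf : StrictMonoOn f I) (hg : IsGenInv I f g) (hC : JC2 I f g) :
    ∀ p ∈ (f '' I) ×ˢ (f '' I), ∀ q ∈ (f '' I) ×ˢ (f '' I),
      ((fun p : ℝ × ℝ => f ((g p.1 + g p.2) / 2)) p +
        (fun p : ℝ × ℝ => f ((g p.1 + g p.2) / 2)) q) / 2 ≤
      (fun p : ℝ × ℝ => f ((g p.1 + g p.2) / 2)) ((1/2 : ℝ) • (p + q)) := by
  have hfc : ContinuousOn f I := f_contOn hIo hIc hf hg hC
  have hconv : Convex ℝ (f '' I) := image_convex hIc hfc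
  have hOC : (f '' I).OrdConnected := hconv.ordConnected
  rintro ⟨u₁, v₁⟩ ⟨hu₁, hv₁⟩ ⟨u₂, v₂⟩ ⟨hu₂, hv₂⟩
  simp only at hu₁ hv₁ hu₂ hv₂ ⊢
  set x₁ := g u₁ with hx₁
  set y₁ := g v₁ with hy₁
  set x₂ := g u₂ with hx₂
  set y₂ := g v₂ with hy₂
  have hx₁I : x₁ ∈ I := g_mem hg hu₁
  have hy₁I : y₁ ∈ I := g_mem hg hv₁
  have hx₂I : x₂ ∈ I := g_mem hg hu₂
  have hy₂I : y₂ ∈ I := g_mem hg hv₂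
  have hfx₁ : f x₁ = u₁ := fg_id hg hu₁
  have hfy₁ : f y₁ = v₁ := fg_id hg hv₁
  have hfx₂ : f x₂ = u₂ := fg_id hg hu₂
  have hfy₂ : f y₂ = v₂ := fg_id hg hv₂
  have h := hC x₁ x₂ y₁ y₂ hx₁I hx₂I hy₁I hy₂I
  rw [hfx₁, hfx₂, hfy₁, hfy₂] at h
  -- the midpoint value W
  set W := (f ((x₁ + y₁) / 2) + f ((x₂ + y₂) / 2)) / 2 with hW
  have hW1 : f ((x₁ + y₁) / 2) ∈ f '' I := ⟨_, mid_mem hIc hx₁I hy₁I, rfl⟩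
  have hW2 : f ((x₂ + y₂) / 2) ∈ f '' I := ⟨_, mid_mem hIc hx₂I hy₂I, rfl⟩
  have hWmem : W ∈ f '' I := mid_mem hOC hW1 hW2
  have hum : (u₁ + u₂) / 2 ∈ convexHull ℝ (f '' I) := mid_mem_hull hu₁ hu₂
  have hvm : (v₁ + v₂) / 2 ∈ convexHull ℝ (f '' I) := mid_mem_hull hv₁ hv₂
  have hgum : g ((u₁ + u₂) / 2) ∈ I := hg.1 hum
  have hgvm : g ((v₁ + v₂) / 2) ∈ I := hg.1 hvm
  set m := (g ((u₁ + u₂) / 2) + g ((v₁ + v₂) / 2)) / 2 with hm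
  have hmI : m ∈ I := mid_mem hIc hgum hgvm
  -- from h : g W ≤ m
  have hgW : g W ≤ m := h
  have hWeq : f (g W) = W := fg_id hg hWmem
  have hfin : W ≤ f m := by
    rw [← hWeq]
    exact hf.monotoneOn (g_mem hg hWmem) hmI hgW
  have e : ((1/2 : ℝ) • ((u₁, v₁) + (u₂, v₂)) : ℝ × ℝ) = ((u₁ + u₂) / 2, (v₁ + v₂) / 2) := by
    ext <;> simp <;> ring
  rw [e]
  simp only
  exact hfin

lemma psi_cont {I : Set ℝ} {f g : ℝ → ℝ} (hIo : IsOpen I) (hIc : I.OrdConnected)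
    (hf : StrictMonoOn f I) (hg : IsGenInv I f g) (hfc : ContinuousOn f I) :
    ContinuousOn (fun p : ℝ × ℝ => f ((g p.1 + g p.2) / 2)) ((f '' I) ×ˢ (f '' I)) := by
  have hgc : ContinuousOn g (f '' I) := g_contOn hIo hIc hf hg
  have h1 : ContinuousOn (fun p : ℝ × ℝ => g p.1) ((f '' I) ×ˢ (f '' I)) :=
    hgc.comp continuousOn_fst (fun p hp => hp.1)
  have h2 : ContinuousOn (fun p : ℝ × ℝ => g p.2) ((f '' I) ×ˢ (f '' I)) :=
    hgc.comp continuousOn_snd (fun p hp => hp.2)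
  have h3 : ContinuousOn (fun p : ℝ × ℝ => (g p.1 + g p.2) / 2) ((f '' I) ×ˢ (f '' I)) :=
    (h1.add h2).div_const 2
  exact hfc.comp h3 (fun p hp => mid_mem hIc (g_mem hg hp.1) (g_mem hg hp.2))

/-- C implies D -/
lemma C_imp_D {I : Set ℝ} {f g : ℝ → ℝ} (hIo : IsOpen I) (hIc : I.OrdConnected)
    (hf : StrictMonoOn f I) (hg : IsGenInv I f g) (hC : JC2 I f g) :
    ContinuousOn f I ∧
      ConcaveOn ℝ ((f '' I) ×ˢ (f '' I))
        (fun p : ℝ × ℝ => f ((g p.1 + g p.2) / 2)) := by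
  have hfc : ContinuousOn f I := f_contOn hIo hIc hf hg hC
  have hconv : Convex ℝ (f '' I) := image_convex hIc hfc
  refine ⟨hfc, ?_⟩
  exact concaveOn_of_midpoint (hconv.prod hconv) (psi_cont hIo hIc hf hg hfc)
    (psi_midpoint hIo hIc hf hg hC)

/-- D implies the n-ary condition. -/
lemma D_imp_All {I : Set ℝ} {f g : ℝ → ℝ} (hIo : IsOpen I) (hIc : I.OrdConnected)
    (hf : StrictMonoOn f I) (hg : IsGenInv I f g) (hfc : ContinuousOn f I)
    (hcc : ConcaveOn ℝ ((f '' I) ×ˢ (f '' I))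
      (fun p : ℝ × ℝ => f ((g p.1 + g p.2) / 2))) :
    ∀ n : ℕ, 0 < n → ∀ x y : Fin n → ℝ, (∀ i, x i ∈ I) → (∀ i, y i ∈ I) →
      g ((∑ i, f ((x i + y i) / 2)) / n) ≤
        (g ((∑ i, f (x i)) / n) + g ((∑ i, f (y i)) / n)) / 2 := by
  intro n hn x y hx hy
  have hconv : Convex ℝ (f '' I) := image_convex hIc hfc
  have hn' : (0:ℝ) < (n:ℝ) := by exact_mod_cast hn
  set w : Fin n → ℝ := fun _ => 1 / (n:ℝ) with hwdef
  have hw0 : ∀ i ∈ Finset.univ (α := Fin n), 0 ≤ w i := fun i _ => by positivity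
  have hw1 : ∑ i, w i = 1 := by
    simp [hwdef, Finset.sum_const, Finset.card_univ]
    field_simp
  have hsum : ∀ z : Fin n → ℝ, ∑ i, w i • z i = (∑ i, z i) / n := by
    intro z
    rw [Finset.sum_div]
    exact Finset.sum_congr rfl fun i _ => by rw [smul_eq_mul, hwdef]; ring
  set p : Fin n → ℝ × ℝ := fun i => (f (x i), f (y i)) with hpdef
  have hmem : ∀ i ∈ Finset.univ (α := Fin n), p i ∈ (f '' I) ×ˢ (f '' I) :=
    fun i _ => ⟨⟨x i, hx i, rfl⟩, ⟨y i, hy i, rfl⟩⟩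
  have hJ := hcc.le_map_sum hw0 hw1 hmem
  have ePsi : ∀ i : Fin n,
      (fun p : ℝ × ℝ => f ((g p.1 + g p.2) / 2)) (p i) = f ((x i + y i) / 2) := by
    intro i
    simp only [hpdef]
    rw [hg.2.2 _ (hx i), hg.2.2 _ (hy i)]
  set A := (∑ i, f ((x i + y i) / 2)) / (n:ℝ) with hA
  set B := (∑ i, f (x i)) / (n:ℝ) with hB
  set Cc := (∑ i, f (y i)) / (n:ℝ) with hCc
  have hsump : ∑ i, w i • p i = (B, Cc) := by
    apply Prod.ext
    · rw [Prod.fst_sum]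
      simp only [Prod.smul_fst, hpdef]
      rw [hB]
      exact hsum _
    · rw [Prod.snd_sum]
      simp only [Prod.smul_snd, hpdef]
      rw [hCc]
      exact hsum _
  have hLHS : ∑ i, w i • (fun p : ℝ × ℝ => f ((g p.1 + g p.2) / 2)) (p i) = A := by
    rw [hA, ← hsum]
    exact Finset.sum_congr rfl fun i _ => by rw [ePsi i]
  rw [hLHS, hsump] at hJ
  -- memberships
  have hBmem : B ∈ f '' I := by
    have := hconv.sum_mem hw0 hw1 (fun i _ => (⟨x i, hx i, rfl⟩ : f (x i) ∈ f '' I))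
    rwa [hsum] at this
  have hCmem : Cc ∈ f '' I := by
    have := hconv.sum_mem hw0 hw1 (fun i _ => (⟨y i, hy i, rfl⟩ : f (y i) ∈ f '' I))
    rwa [hsum] at this
  have hAmem : A ∈ f '' I := by
    have := hconv.sum_mem hw0 hw1
      (fun i _ => (⟨(x i + y i) / 2, mid_mem hIc (hx i) (hy i), rfl⟩ :
        f ((x i + y i) / 2) ∈ f '' I))
    rwa [hsum] at this
  set m := (g B + g Cc) / 2 with hmdef
  have hmI : m ∈ I := mid_mem hIc (g_mem hg hBmem) (g_mem hg hCmem)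
  -- hJ : A ≤ f m
  have hfinal : g A ≤ m := by
    have h1 : g A ≤ g (f m) :=
      hg.2.1 ((subset_convexHull ℝ _) hAmem) ((subset_convexHull ℝ _) ⟨m, hmI, rfl⟩) hJ
    rwa [hg.2.2 m hmI] at h1
  exact hfinal

lemma All_imp_C {I : Set ℝ} {f g : ℝ → ℝ}
    (hAll : ∀ n : ℕ, 0 < n → ∀ x y : Fin n → ℝ, (∀ i, x i ∈ I) → (∀ i, y i ∈ I) →
      g ((∑ i, f ((x i + y i) / 2)) / n) ≤
        (g ((∑ i, f (x i)) / n) + g ((∑ i, f (y i)) / n)) / 2) :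
    JC2 I f g := by
  intro x₁ x₂ y₁ y₂ h1 h2 h3 h4
  have := hAll 2 (by norm_num) ![x₁, x₂] ![y₁, y₂]
    (fun i => by fin_cases i <;> assumption) (fun i => by fin_cases i <;> assumption)
  simpa [Fin.sum_univ_two] using this

theorem stmt_15 (I : Set ℝ)
    (hIo : IsOpen I) (hIc : I.OrdConnected) (hIn : I.Nonempty)
    (f g : ℝ → ℝ) (hf : StrictMonoOn f I) (hg : IsGenInv I f g) :
    ((∀ n : ℕ, 0 < n → ∀ x y : Fin n → ℝ, (∀ i, x i ∈ I) → (∀ i, y i ∈ I) →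
        g ((∑ i, f ((x i + y i) / 2)) / n) ≤
          (g ((∑ i, f (x i)) / n) + g ((∑ i, f (y i)) / n)) / 2) ↔
      (∀ x₁ x₂ y₁ y₂ : ℝ, x₁ ∈ I → x₂ ∈ I → y₁ ∈ I → y₂ ∈ I →
        g ((f ((x₁ + y₁) / 2) + f ((x₂ + y₂) / 2)) / 2) ≤
          (g ((f x₁ + f x₂) / 2) + g ((f y₁ + f y₂) / 2)) / 2)) ∧
    ((∀ n : ℕ, 0 < n → ∀ x y : Fin n → ℝ, (∀ i, x i ∈ I) → (∀ i, y i ∈ I) →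
        g ((∑ i, f ((x i + y i) / 2)) / n) ≤
          (g ((∑ i, f (x i)) / n) + g ((∑ i, f (y i)) / n)) / 2) ↔
      (ContinuousOn f I ∧
        ConcaveOn ℝ ((f '' I) ×ˢ (f '' I))
          (fun p : ℝ × ℝ => f ((g p.1 + g p.2) / 2)))) := by
  constructor
  · constructor
    · exact fun hAll => All_imp_C hAll
    · intro hC
      obtain ⟨hfc, hcc⟩ := C_imp_D hIo hIc hf hg hC
      exact D_imp_All hIo hIc hf hg hfc hcc
  · constructor
    · intro hAll
      exact C_imp_D hIo hIc hf hg (All_imp_C hAll)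
    · intro ⟨hfc, hcc⟩
      exact D_imp_All hIo hIc hf hg hfc hcc
end

section
/- Let f : I → ℝ be strictly increasing on a nonempty open interval. If the two-variable generalized quasi-arithmetic mean A_f^[2](x₁,x₂) = f^(-1)((f(x₁)+f(x₂))/2) satisfies A_f^[2]((x₁+y₁)/2,(x₂+y₂)/2) ≤ (A_f^[2](x₁,x₂)+A_f^[2](y₁,y₂))/2 for all (x₁,x₂),(y₁,y₂) ∈ I², then f is continuous on I. -/
theorem stmt_16 (I : Set ℝ)
    (hIo : IsOpen I) (hIc : I.OrdConnected) (hIn : I.Nonempty)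
    (f g : ℝ → ℝ) (hf : StrictMonoOn f I) (hg : IsGenInv I f g)
    (h2 : ∀ x₁ x₂ y₁ y₂ : ℝ, x₁ ∈ I → x₂ ∈ I → y₁ ∈ I → y₂ ∈ I →
      g ((f ((x₁ + y₁) / 2) + f ((x₂ + y₂) / 2)) / 2) ≤
        (g ((f x₁ + f x₂) / 2) + g ((f y₁ + f y₂) / 2)) / 2) :
    ContinuousOn f I := by
  obtain ⟨hmap, hmono, hinv⟩ := hg
  have hmemH : ∀ x ∈ I, f x ∈ convexHull ℝ (f '' I) :=
    fun x hx => subset_convexHull ℝ _ ⟨x, hx, rfl⟩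
  have hmidH : ∀ x ∈ I, ∀ y ∈ I, (f x + f y) / 2 ∈ convexHull ℝ (f '' I) := by
    intro x hx y hy
    have h := (convex_convexHull ℝ (f '' I)) (hmemH x hx) (hmemH y hy)
      (by norm_num : (0:ℝ) ≤ 1/2) (by norm_num : (0:ℝ) ≤ 1/2) (by norm_num)
    have e : (1/2 : ℝ) • f x + (1/2 : ℝ) • f y = (f x + f y) / 2 := by
      simp [smul_eq_mul]; ring
    rwa [e] at h
  have hmidI : ∀ x ∈ I, ∀ y ∈ I, (x + y) / 2 ∈ I := by
    intro x hx y hy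
    rcases le_total x y with h | h
    · exact hIc.out hx hy ⟨by linarith, by linarith⟩
    · exact hIc.out hy hx ⟨by linarith, by linarith⟩
  -- Step A : the midpoint inequality
  have stepA : ∀ x ∈ I, ∀ y ∈ I, (x + y) / 2 ≤ g ((f x + f y) / 2) := by
    intro x hx y hy
    have hm : (x + y) / 2 ∈ I := hmidI x hx y hy
    have h := h2 x y y x hx hy hy hx
    have e1 : (y + x) / 2 = (x + y) / 2 := by ring
    rw [e1] at h
    have e2 : (f ((x + y) / 2) + f ((x + y) / 2)) / 2 = f ((x + y) / 2) := by ring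
    rw [e2, hinv _ hm] at h
    have e3 : f y + f x = f x + f y := by ring
    rw [e3] at h
    linarith
  -- Step B : quasi-convexity inequality
  have stepB : ∀ u ∈ I, ∀ x ∈ I, ∀ y ∈ I, u < (x + y) / 2 → 2 * f u ≤ f x + f y := by
    intro u hu x hx y hy hlt
    by_contra hcon
    push_neg at hcon
    have hle : (f x + f y) / 2 ≤ f u := by linarith
    have h1 := hmono (hmidH x hx y hy) (hmemH u hu) hle
    rw [hinv u hu] at h1
    have h2' := stepA x hx y hy
    linarith
  -- Step C : no right jumps
  have stepC : ∀ p ∈ I, ∀ ε > 0, ∃ z, z ∈ I ∧ p < z ∧ f z < f p + ε := by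
    intro p hp ε hε
    by_contra hcon
    push_neg at hcon
    obtain ⟨δ, hδ, hball⟩ := Metric.isOpen_iff.1 hIo p hp
    have hz₀I : p + δ/2 ∈ I := by
      apply hball
      rw [Metric.mem_ball, Real.dist_eq]
      rw [abs_of_pos (by linarith)]
      linarith
    have hz₀p : p < p + δ/2 := by linarith
    have main : ∀ n : ℕ, ∀ z ∈ I, p < z → f p + 2 ^ n * ε ≤ f z := by
      intro n
      induction n with
      | zero => intro z hz hpz; simpa using hcon z hz hpz
      | succ n ih =>
        intro z hz hpz
        have huI : (3 * p + z) / 4 ∈ I := hIc.out hp hz ⟨by linarith, by linarith⟩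
        have hu1 : p < (3 * p + z) / 4 := by linarith
        have hB := stepB _ huI p hp z hz (by linarith)
        have hih := ih _ huI hu1
        have e : (2:ℝ) ^ (n + 1) = 2 ^ n * 2 := pow_succ 2 n
        rw [e]
        linarith
    obtain ⟨n, hn⟩ := pow_unbounded_of_one_lt ((f (p + δ/2) - f p) / ε) (by norm_num : (1:ℝ) < 2)
    have h1 := main n _ hz₀I hz₀p
    have h2' := (div_lt_iff₀ hε).1 hn
    linarith
  -- Step D : no left jumps
  have stepD : ∀ p ∈ I, ∀ ε > 0, ∃ x, x ∈ I ∧ x < p ∧ f p - ε < f x := by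
    intro p hp ε hε
    obtain ⟨z, hzI, hpz, hfz⟩ := stepC p hp ε hε
    obtain ⟨δ, hδ, hball⟩ := Metric.isOpen_iff.1 hIo p hp
    set m := min (δ/2) ((z - p)/2) with hm
    have hm0 : 0 < m := lt_min (by linarith) (by linarith)
    have hmδ : m ≤ δ/2 := min_le_left _ _
    have hmz : m ≤ (z - p)/2 := min_le_right _ _
    have hxI : p - m ∈ I := by
      apply hball
      rw [Metric.mem_ball, Real.dist_eq]
      rw [abs_of_neg (by linarith)]
      linarith
    have hxp : p - m < p := by linarith
    have hB := stepB p hp (p - m) hxI z hzI (by linarith)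
    exact ⟨p - m, hxI, hxp, by linarith⟩
  -- Conclusion
  have hcont : ∀ p ∈ I, ContinuousAt f p := by
    intro p hp
    rw [Metric.continuousAt_iff]
    intro ε hε
    obtain ⟨z, hzI, hpz, hfz⟩ := stepC p hp ε hε
    obtain ⟨x, hxI, hxp, hfx⟩ := stepD p hp ε hε
    obtain ⟨δ₀, hδ₀, hball⟩ := Metric.isOpen_iff.1 hIo p hp
    refine ⟨min (min (z - p) (p - x)) δ₀,
      lt_min (lt_min (by linarith) (by linarith)) hδ₀, ?_⟩
    intro q hq
    rw [Real.dist_eq] at hq ⊢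
    have hq1 : |q - p| < z - p :=
      lt_of_lt_of_le hq (le_trans (min_le_left _ _) (min_le_left _ _))
    have hq2 : |q - p| < p - x :=
      lt_of_lt_of_le hq (le_trans (min_le_left _ _) (min_le_right _ _))
    have hq3 : |q - p| < δ₀ := lt_of_lt_of_le hq (min_le_right _ _)
    have hqI : q ∈ I := by
      apply hball
      rwa [Metric.mem_ball, Real.dist_eq]
    obtain ⟨h1a, h1b⟩ := abs_lt.1 hq1
    obtain ⟨h2a, h2b⟩ := abs_lt.1 hq2
    have hqz : q < z := by linarith
    have hxq : x < q := by linarith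
    rw [abs_lt]
    constructor
    · rcases le_or_gt p q with h | h
      · have := hf.monotoneOn hp hqI h; linarith
      · have := hf hxI hqI hxq; linarith
    · rcases le_or_gt q p with h | h
      · have := hf.monotoneOn hqI hp h; linarith
      · have := hf hqI hzI hqz; linarith
  exact fun p hp => (hcont p hp).continuousWithinAt
end
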